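/- Lipschitz continuity of exponential attention weights in the query. Let V be a nonempty finite set, let k : V → ℝ^{d_out} be keys with ‖k_u‖ ≤ C for all u ∈ V, and for q ∈ ℝ^{d_out} define the weights w_u(q) := exp(⟨q, k_u⟩) / Σ_{w∈V} exp(⟨q, k_w⟩). Then for all q, q' ∈ ℝ^{d_out}: Σ_{u∈V} |w_u(q) − w_u(q')| ≤ 2 C ‖q − q'‖. -/

import Mathlib

/-!
If two logit vectors differ by at most `δ` in every coordinate, their log-partition functions
`log ∑ exp` differ by at most `δ`, so the logarithms of corresponding softmax weights differ by at
most `2δ`. The logarithmic mean is at most the arithmetic mean,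
`|e^x - e^y| ≤ (e^x + e^y) / 2 * |x - y|`, hence `|w_u - w'_u| ≤ δ (w_u + w'_u)`, and summing over
`u` gives `2δ`. For attention logits `⟪q, k_u⟫`, Cauchy–Schwarz gives `δ = C ‖q - q'‖`.
-/

open Real
open scoped RealInnerProductSpace

namespace Real

lemma two_mul_abs_exp_sub_one_le (t : ℝ) : 2 * |exp t - 1| ≤ |t| * (exp t + 1) := by
  set f : ℝ → ℝ := fun t => t * (exp t + 1) - 2 * (exp t - 1)
  have hf' : ∀ x, HasDerivAt f ((x - 1) * exp x + 1) x := fun x =>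
    (((hasDerivAt_id' x).mul ((hasDerivAt_exp x).add_const 1)).sub
      (((hasDerivAt_exp x).sub_const 1).const_mul 2)).congr_deriv (by ring)
  -- `(x - 1) e^x + 1 ≥ 0` is `1 - x ≤ e^{-x}`
  have hf'_nonneg : ∀ x, 0 ≤ (x - 1) * exp x + 1 := fun x => by
    have h := mul_le_mul_of_nonneg_left (add_one_le_exp (-x)) (exp_pos x).le
    rw [← exp_add, add_neg_cancel, exp_zero] at h
    nlinarith
  have hf_mono : Monotone f :=
    monotone_of_deriv_nonneg (fun x => (hf' x).differentiableAt)
      (fun x => (hf' x).deriv ▸ hf'_nonneg x)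
  have hf0 : f 0 = 0 := by simp [f]
  rcases le_total 0 t with ht | ht
  · have := hf0 ▸ hf_mono ht
    rw [abs_of_nonneg ht, abs_of_nonneg (sub_nonneg.2 (one_le_exp ht))]
    simp only [f] at this
    linarith
  · have := hf0 ▸ hf_mono ht
    rw [abs_of_nonpos ht, abs_of_nonpos (sub_nonpos.2 (exp_le_one_iff.2 ht))]
    simp only [f] at this
    linarith

lemma abs_exp_sub_exp_le (x y : ℝ) : |exp x - exp y| ≤ (exp x + exp y) / 2 * |x - y| := by
  have h := mul_le_mul_of_nonneg_left (two_mul_abs_exp_sub_one_le (x - y)) (exp_pos y).le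
  have hx : exp x = exp y * exp (x - y) := by rw [← exp_add, add_sub_cancel]
  calc |exp x - exp y| = exp y * |exp (x - y) - 1| := by
        rw [hx, ← mul_sub_one, abs_mul, abs_of_pos (exp_pos y)]
    _ ≤ (exp x + exp y) / 2 * |x - y| := by rw [hx]; nlinarith

end Real

noncomputable def softmax {V : Type*} [Fintype V] (a : V → ℝ) (u : V) : ℝ :=
  exp (a u) / ∑ w, exp (a w)

section Softmax

variable {V : Type*} [Fintype V] [Nonempty V]

lemma log_sum_exp_le_log_sum_exp_add {a b : V → ℝ} {δ : ℝ} (h : ∀ u, a u ≤ b u + δ) :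
    log (∑ u, exp (a u)) ≤ log (∑ u, exp (b u)) + δ := by
  rw [← log_exp δ, ← log_mul (by positivity) (exp_pos δ).ne',
    log_le_log_iff (by positivity) (by positivity), Finset.sum_mul]
  gcongr with u
  rw [← exp_add]
  exact exp_le_exp.2 (h u)

lemma abs_log_sum_exp_sub_le {a b : V → ℝ} {δ : ℝ} (h : ∀ u, |a u - b u| ≤ δ) :
    |log (∑ u, exp (a u)) - log (∑ u, exp (b u))| ≤ δ := by
  have hab : log (∑ u, exp (a u)) ≤ log (∑ u, exp (b u)) + δ :=
    log_sum_exp_le_log_sum_exp_add fun u => by linarith [(abs_sub_le_iff.1 (h u)).1]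
  have hba : log (∑ u, exp (b u)) ≤ log (∑ u, exp (a u)) + δ :=
    log_sum_exp_le_log_sum_exp_add fun u => by linarith [(abs_sub_le_iff.1 (h u)).2]
  exact abs_sub_le_iff.2 ⟨by linarith, by linarith⟩

lemma softmax_eq_exp_sub_log (a : V → ℝ) (u : V) :
    softmax a u = exp (a u - log (∑ w, exp (a w))) := by
  rw [exp_sub, exp_log (by positivity), softmax]

lemma sum_softmax (a : V → ℝ) : ∑ u, softmax a u = 1 := by
  simp only [softmax, ← Finset.sum_div]
  exact div_self (by positivity)

lemma abs_softmax_sub_softmax_le {a b : V → ℝ} {δ : ℝ} (h : ∀ u, |a u - b u| ≤ δ) (u : V) :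
    |softmax a u - softmax b u| ≤ δ * (softmax a u + softmax b u) := by
  have hlog : |(a u - log (∑ w, exp (a w))) - (b u - log (∑ w, exp (b w)))| ≤ 2 * δ := by
    calc _ = |(a u - b u) - (log (∑ w, exp (a w)) - log (∑ w, exp (b w)))| := by ring_nf
      _ ≤ δ + δ := (abs_sub _ _).trans (add_le_add (h u) (abs_log_sum_exp_sub_le h))
      _ = 2 * δ := by ring
  calc |softmax a u - softmax b u| ≤ (softmax a u + softmax b u) / 2 * (2 * δ) := by
        rw [softmax_eq_exp_sub_log a, softmax_eq_exp_sub_log b]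
        exact (abs_exp_sub_exp_le _ _).trans (by gcongr)
    _ = δ * (softmax a u + softmax b u) := by ring

lemma sum_abs_softmax_sub_softmax_le {a b : V → ℝ} {δ : ℝ} (h : ∀ u, |a u - b u| ≤ δ) :
    ∑ u, |softmax a u - softmax b u| ≤ 2 * δ :=
  calc ∑ u, |softmax a u - softmax b u| ≤ ∑ u, δ * (softmax a u + softmax b u) :=
        Finset.sum_le_sum fun u _ => abs_softmax_sub_softmax_le h u
    _ = 2 * δ := by
        rw [← Finset.mul_sum, Finset.sum_add_distrib, sum_softmax, sum_softmax]
        ring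

end Softmax

/-- **Lipschitz continuity of exponential attention weights in the query.**
Let `k : V → ℝ^{d_out}` be keys with `‖k_u‖ ≤ C`, and for a query `q` let
`w_u(q) = exp(⟨q, k_u⟩) / ∑_w exp(⟨q, k_w⟩)` be the induced softmax weights. Then
`∑_u |w_u(q) − w_u(q')| ≤ 2 C ‖q − q'‖` for all queries `q, q'`. -/
theorem softmax_weights_lipschitz_in_query
    {V : Type*} [Fintype V] [Nonempty V] {dout : ℕ}
    (k : V → EuclideanSpace ℝ (Fin dout)) (C : ℝ) (hC : ∀ u : V, ‖k u‖ ≤ C)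
    (q q' : EuclideanSpace ℝ (Fin dout)) :
    ∑ u : V, |Real.exp ⟪q, k u⟫ / (∑ w : V, Real.exp ⟪q, k w⟫) -
        Real.exp ⟪q', k u⟫ / (∑ w : V, Real.exp ⟪q', k w⟫)| ≤
      2 * C * ‖q - q'‖ := by
  have hlogits : ∀ u, |⟪q, k u⟫ - ⟪q', k u⟫| ≤ C * ‖q - q'‖ := fun u =>
    calc |⟪q, k u⟫ - ⟪q', k u⟫| = |⟪q - q', k u⟫| := by rw [inner_sub_left]
      _ ≤ ‖q - q'‖ * ‖k u‖ := abs_real_inner_le_norm _ _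
      _ ≤ ‖q - q'‖ * C := mul_le_mul_of_nonneg_left (hC u) (norm_nonneg _)
      _ = C * ‖q - q'‖ := mul_comm _ _
  rw [mul_assoc]
  exact sum_abs_softmax_sub_softmax_le hlogits
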